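/- arXiv:1806.03456 — 3 statements merged into one kernel-verified Lean document; each statement's English description precedes it below -/
import Mathlib

section
/- Let f : ℝ → ℝ be C^{k+2} on a neighborhood of a root x̄ with f(x̄) = 0 and f'(x̄) ≠ 0, and let g be the local inverse of f near x̄. Define the iteration map Φ_k(x) = x + Σ_{i=1}^{k} (g^{(i)}(f(x)) / i!) · (−f(x))^i. Then there exist δ > 0 and C > 0 such that |x − x̄| < δ implies |Φ_k(x) − x̄| ≤ C·|x − x̄|^{k+1}. -/
open Filter

open Set Metric in
private lemma aux_taylor (k : ℕ) (g : ℝ → ℝ) (hg : ContDiffAt ℝ (k + 2) g 0) :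
    ∃ ε > 0, ∃ C > 0, ∀ y : ℝ, |y| < ε →
      |(∑ i ∈ Finset.range (k + 1),
          iteratedDeriv i g y * (-y) ^ i / (Nat.factorial i : ℝ)) - g 0|
        ≤ C * |y| ^ (k + 1) := by
  obtain ⟨u, hu, hcu⟩ := hg.contDiffOn le_rfl (by
    intro hEq
    exfalso
    have h3 : ((k + 2 : ℕ) : WithTop ℕ∞) = ((⊤ : ℕ∞) : WithTop ℕ∞) := by exact_mod_cast hEq
    rw [← WithTop.coe_natCast, WithTop.coe_inj] at h3
    exact ENat.coe_ne_top _ h3)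
  obtain ⟨r, hr, hball⟩ := Metric.mem_nhds_iff.1 hu
  set s : Set ℝ := Metric.ball (0 : ℝ) r with hs
  have hopen : IsOpen s := Metric.isOpen_ball
  have hco : ContDiffOn ℝ (k + 2) g s := hcu.mono hball
  have hEq : ∀ (i : ℕ), ∀ t ∈ s, iteratedDerivWithin i g s t = iteratedDeriv i g t := by
    intro i t ht
    rw [iteratedDerivWithin_eq_iteratedFDerivWithin, iteratedDeriv_eq_iteratedFDeriv,
      iteratedFDerivWithin_of_isOpen i hopen ht]
  have hder : ∀ i : ℕ, i ≤ k + 1 → ∀ t ∈ s, HasDerivAt (iteratedDeriv i g)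
      (iteratedDeriv (i + 1) g t) t := by
    intro i hi t ht
    have hlt : (i : WithTop ℕ∞) < (k : WithTop ℕ∞) + 2 := by
      exact_mod_cast (by omega : i < k + 2)
    have hd : DifferentiableWithinAt ℝ (iteratedDerivWithin i g s) s t :=
      hco.differentiableOn_iteratedDerivWithin hlt hopen.uniqueDiffOn t ht
    have hda : DifferentiableAt ℝ (iteratedDerivWithin i g s) t :=
      hd.differentiableAt (hopen.mem_nhds ht)
    have hcongr : iteratedDerivWithin i g s =ᶠ[nhds t] iteratedDeriv i g :=
      eventually_of_mem (hopen.mem_nhds ht) (fun z hz => hEq i z hz)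
    have hda' : DifferentiableAt ℝ (iteratedDeriv i g) t :=
      hda.congr_of_eventuallyEq hcongr.symm
    rw [iteratedDeriv_succ]
    exact hda'.hasDerivAt
  have hcont : ContinuousOn (iteratedDeriv (k + 1) g) s := by
    have hle : ((k + 1 : ℕ) : WithTop ℕ∞) ≤ (k : WithTop ℕ∞) + 2 := by
      exact_mod_cast (by omega : k + 1 ≤ k + 2)
    have := hco.continuousOn_iteratedDerivWithin hle hopen.uniqueDiffOn
    exact this.congr fun t ht => (hEq (k + 1) t ht).symm
  have hsub : Icc (-(r/2)) (r/2) ⊆ s := by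
    intro t ht
    have : |t| ≤ r / 2 := abs_le.2 ⟨by linarith [ht.1], ht.2⟩
    simp only [hs, Metric.mem_ball, Real.dist_eq, sub_zero]
    linarith
  obtain ⟨M, hM⟩ := isCompact_Icc.exists_bound_of_continuousOn (hcont.mono hsub)
  set C : ℝ := max M 0 + 1 with hC
  have hCpos : 0 < C := by positivity
  refine ⟨r / 2, by positivity, C, hCpos, ?_⟩
  intro y hy
  set ψ : ℝ → ℝ := fun z : ℝ =>
    ∑ i ∈ Finset.range (k + 1), iteratedDeriv i g z * (-z) ^ i / (Nat.factorial i : ℝ)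
    with hψdef
  set b : ℕ → ℝ → ℝ := fun j t =>
    iteratedDeriv j g t * (-t) ^ (j - 1) * (j : ℝ) / (Nat.factorial j : ℝ) with hb
  have hψ0 : ψ 0 = g 0 := by
    rw [hψdef]
    simp only
    rw [Finset.sum_eq_single 0]
    · simp
    · intro i _ hi
      simp [zero_pow hi]
    · intro h
      exact absurd (Finset.mem_range.2 (Nat.succ_pos k)) h
  have key : ∀ t ∈ s, HasDerivAt ψ (b (k + 1) t) t := by
    intro t ht
    have h1 : HasDerivAt ψ (∑ i ∈ Finset.range (k + 1), (b (i + 1) t - b i t)) t := by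
      apply HasDerivAt.fun_sum
      intro i hi
      have hik : i ≤ k + 1 := by
        have := Finset.mem_range.1 hi; omega
      have hgi := hder i hik t ht
      have hpow : HasDerivAt (fun z : ℝ => (-z) ^ i) ((i : ℝ) * (-t) ^ (i - 1) * (-1)) t :=
        (hasDerivAt_neg t).pow i
      have hterm := (hgi.mul hpow).div_const (Nat.factorial i : ℝ)
      refine hterm.congr_deriv ?_
      symm
      rw [hb]
      simp only
      have hfac : ((Nat.factorial (i + 1) : ℕ) : ℝ) = ((i : ℝ) + 1) * (Nat.factorial i : ℝ) := by
        exact_mod_cast Nat.factorial_succ i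
      have hfne : (Nat.factorial i : ℝ) ≠ 0 := Nat.cast_ne_zero.2 (Nat.factorial_ne_zero i)
      rw [Nat.add_sub_cancel, hfac]
      push_cast
      field_simp
      ring
    rwa [Finset.sum_range_sub (fun j => b j t), show b 0 t = 0 by simp [hb], sub_zero] at h1
  have habs : ∀ t ∈ uIcc (0:ℝ) y, |t| ≤ |y| := by
    intro t ht
    rcases Set.mem_uIcc.1 ht with ⟨h1, h2⟩ | ⟨h1, h2⟩
    · rw [abs_of_nonneg h1]; exact h2.trans (le_abs_self y)
    · rw [abs_of_nonpos h2]
      calc -t ≤ -y := by linarith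
        _ ≤ |y| := neg_le_abs y
  have hDs : uIcc (0:ℝ) y ⊆ s := by
    intro t ht
    have := habs t ht
    simp only [hs, Metric.mem_ball, Real.dist_eq, sub_zero]
    have := abs_le.1 this
    rcases abs_lt.1 (lt_of_le_of_lt (habs t ht) hy) with ⟨ha, hb'⟩
    rw [abs_lt]; constructor <;> linarith
  have hbound : ∀ t ∈ uIcc (0:ℝ) y, ‖b (k + 1) t‖ ≤ C * |y| ^ k := by
    intro t ht
    have hty : |t| ≤ |y| := habs t ht
    have htI : t ∈ Icc (-(r/2)) (r/2) := by
      have h5 := abs_le.1 (hty.trans hy.le)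
      exact ⟨h5.1, h5.2⟩
    have hMt := hM t htI
    have hMnn : |iteratedDeriv (k + 1) g t| ≤ max M 0 := le_trans hMt (le_max_left _ _)
    have e1 : (((k : ℝ) + 1)) / ((Nat.factorial (k + 1) : ℕ) : ℝ) ≤ 1 := by
      rw [div_le_one (by positivity)]
      exact_mod_cast Nat.self_le_factorial (k + 1)
    have heq : ‖b (k + 1) t‖ =
        (|iteratedDeriv (k + 1) g t| * |t| ^ k) * (((k : ℝ) + 1) / (Nat.factorial (k + 1) : ℝ)) := by
      rw [hb]
      simp only [Nat.add_sub_cancel]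
      rw [Real.norm_eq_abs, abs_div, abs_mul, abs_mul, abs_pow, abs_neg, Nat.abs_cast,
        Nat.abs_cast]
      push_cast
      ring
    rw [heq]
    calc (|iteratedDeriv (k + 1) g t| * |t| ^ k) * (((k : ℝ) + 1) / (Nat.factorial (k + 1) : ℝ))
        ≤ ((max M 0) * |y| ^ k) * 1 := by
          apply mul_le_mul _ e1 (by positivity) (by positivity)
          exact mul_le_mul hMnn (pow_le_pow_left₀ (abs_nonneg t) hty k) (by positivity)
            (le_max_right _ _)
      _ ≤ C * |y| ^ k := by
          rw [mul_one, hC]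
          have : (0:ℝ) ≤ |y| ^ k := by positivity
          nlinarith
  have hmvt := Convex.norm_image_sub_le_of_norm_hasDerivWithin_le
    (f := ψ) (f' := b (k + 1)) (s := uIcc (0:ℝ) y) (x := (0:ℝ)) (y := y)
    (fun t ht => (key t (hDs ht)).hasDerivWithinAt) hbound (convex_uIcc 0 y)
    Set.left_mem_uIcc Set.right_mem_uIcc
  have : |ψ y - g 0| ≤ C * |y| ^ (k + 1) := by
    rw [← hψ0]
    calc |ψ y - ψ 0| ≤ C * |y| ^ k * ‖y - 0‖ := hmvt
      _ = C * |y| ^ (k + 1) := by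
          rw [sub_zero, Real.norm_eq_abs, pow_succ]; ring
  exact this

theorem stmt5 (k : ℕ) (hk : 1 ≤ k) (f g : ℝ → ℝ) (xb : ℝ)
    (hf : ContDiffAt ℝ (k + 2) f xb) (h0 : f xb = 0) (h1 : deriv f xb ≠ 0)
    (hg : ∀ᶠ y in nhds xb, g (f y) = y) :
    ∃ δ > 0, ∃ C > 0, ∀ x : ℝ, |x - xb| < δ →
      |(x + ∑ i ∈ Finset.Icc 1 k,
          iteratedDeriv i g (f x) / (Nat.factorial i : ℝ) * (-(f x)) ^ i) - xb|
        ≤ C * |x - xb| ^ (k + 1) := by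
  have hn : (1 : WithTop ℕ∞) ≤ (k : WithTop ℕ∞) + 2 := by
    exact_mod_cast (by omega : (1:ℕ) ≤ k + 2)
  have hdf : DifferentiableAt ℝ f xb := hf.differentiableAt (zero_lt_one.trans_le hn).ne'
  set c := deriv f xb with hc
  set f' : ℝ ≃L[ℝ] ℝ := ContinuousLinearEquiv.unitsEquivAut ℝ (Units.mk0 c h1) with hf'def
  have hf' : HasFDerivAt f (f' : ℝ →L[ℝ] ℝ) xb := by
    have hd : HasDerivAt f c xb := hdf.hasDerivAt
    rw [hasDerivAt_iff_hasFDerivAt] at hd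
    refine hd.congr_fderiv ?_
    ext; simp [hf'def]
  have hfs := hf.hasStrictFDerivAt' hf' (zero_lt_one.trans_le hn).ne'
  have hface := hfs.localInverse_unique hg
  rw [h0] at hface
  have hCg : ContDiffAt ℝ (k + 2) g 0 := by
    have h2 := hf.to_localInverse hf' (zero_lt_one.trans_le hn).ne'
    rw [h0] at h2
    exact h2.congr_of_eventuallyEq hface
  have hg0 : g 0 = xb := by rw [← h0]; exact hg.self_of_nhds
  obtain ⟨ε, hε, C1, hC1, hT⟩ := aux_taylor k g hCg
  set L := |c| + 1 with hL
  have hLpos : 0 < L := by positivity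
  have hfl : ∀ᶠ x in nhds xb, |f x| ≤ L * |x - xb| := by
    have hd : HasDerivAt f c xb := hdf.hasDerivAt
    have hlo := (hasDerivAt_iff_isLittleO.1 hd).bound one_pos
    filter_upwards [hlo] with x hx
    have hx2 : |f x - f xb - (x - xb) * c| ≤ 1 * |x - xb| := by
      simpa [Real.norm_eq_abs, smul_eq_mul] using hx
    have h9 : f x = (f x - f xb - (x - xb) * c) + (x - xb) * c := by rw [h0]; ring
    rw [h9]
    refine (abs_add_le _ _).trans ?_
    rw [abs_mul]
    calc |f x - f xb - (x - xb) * c| + |x - xb| * |c|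
        ≤ 1 * |x - xb| + |x - xb| * |c| := add_le_add hx2 le_rfl
      _ = L * |x - xb| := by rw [hL]; ring
  have hfe : ∀ᶠ x in nhds xb, |f x| < ε := by
    have hc2 : ContinuousAt f xb := hdf.continuousAt
    have h3 : Tendsto f (nhds xb) (nhds 0) := h0 ▸ hc2
    have h4 : ∀ᶠ z in nhds (0:ℝ), |z| < ε := by
      filter_upwards [Metric.ball_mem_nhds (0:ℝ) hε] with z hz
      simpa [Real.dist_eq] using hz
    exact h3.eventually h4
  obtain ⟨δ, hδ, hδall⟩ := Metric.eventually_nhds_iff.1 (hg.and (hfl.and hfe))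
  refine ⟨δ, hδ, C1 * L ^ (k + 1), by positivity, ?_⟩
  intro x hx
  have hx' : dist x xb < δ := by rwa [Real.dist_eq]
  obtain ⟨hgx, hflx, hfex⟩ := hδall hx'
  have hsum : x + ∑ i ∈ Finset.Icc 1 k,
      iteratedDeriv i g (f x) / (Nat.factorial i : ℝ) * (-(f x)) ^ i
      = ∑ i ∈ Finset.range (k + 1),
          iteratedDeriv i g (f x) * (-(f x)) ^ i / (Nat.factorial i : ℝ) := by
    have hins : Finset.range (k + 1) = insert 0 (Finset.Icc 1 k) := by
      ext i
      simp only [Finset.mem_range, Finset.mem_insert, Finset.mem_Icc]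
      omega
    rw [hins, Finset.sum_insert (by simp)]
    congr 1
    · simp [hgx]
    · exact Finset.sum_congr rfl fun i _ => by ring
  rw [hsum]
  have hTy := hT (f x) hfex
  rw [hg0] at hTy
  calc |(∑ i ∈ Finset.range (k + 1),
      iteratedDeriv i g (f x) * (-(f x)) ^ i / (Nat.factorial i : ℝ)) - xb|
      ≤ C1 * |f x| ^ (k + 1) := hTy
    _ ≤ C1 * (L * |x - xb|) ^ (k + 1) := by
        apply mul_le_mul_of_nonneg_left _ hC1.le
        exact pow_le_pow_left₀ (abs_nonneg _) hflx _
    _ = C1 * L ^ (k + 1) * |x - xb| ^ (k + 1) := by rw [mul_pow]; ring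
end

section
/- Let f : ℝ → ℝ be analytic near a simple root x̄ (f(x̄)=0, f'(x̄)≠0), g its local inverse near x̄, and Φ_k the k-term truncated inverse-series iteration. Then the error satisfies: x̄ − Φ_k(x) = (g^{(k+1)}(f(x̄)) / (k+1)!) · (f'(x̄))^{k+1} · (x̄ − x)^{k+1} + o(|x̄ − x|^{k+1}) as x → x̄. -/
open Filter Asymptotics Topology

-- Taylor remainder with Peano-type form for smooth g at 0
theorem aux_taylor_s6 (k : ℕ) (g : ℝ → ℝ) (hga : AnalyticAt ℝ g 0) :
    (fun u : ℝ => g 0 - (∑ i ∈ Finset.range (k+1),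
        iteratedDeriv i g u / (Nat.factorial i : ℝ) * (-u) ^ i)
      - iteratedDeriv (k+1) g 0 / (Nat.factorial (k+1) : ℝ) * (-u) ^ (k+1))
      =o[nhds 0] fun u : ℝ => |u| ^ (k+1) := by
  obtain ⟨r, hr, hball⟩ : ∃ r > 0, ∀ t, dist t (0:ℝ) < r → AnalyticAt ℝ g t :=
    Metric.eventually_nhds_iff.mp hga.eventually_analyticAt
  have hAn : ∀ i : ℕ, AnalyticOnNhd ℝ (iteratedDeriv i g) (Metric.ball (0:ℝ) r) := by
    intro i
    have h0' : AnalyticOnNhd ℝ g (Metric.ball (0:ℝ) r) := fun t ht => hball t (by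
      simpa [Metric.mem_ball] using ht)
    simpa [iteratedDeriv_eq_iterate] using h0'.iterated_deriv i
  have hD : ∀ (i : ℕ), ∀ t ∈ Metric.ball (0:ℝ) r,
      HasDerivAt (iteratedDeriv i g) (iteratedDeriv (i+1) g t) t := by
    intro i t ht
    have hd := ((hAn i) t ht).differentiableAt.hasDerivAt
    rwa [← iteratedDeriv_succ] at hd
  set D : ℝ → ℝ := fun u => g 0 - (∑ i ∈ Finset.range (k+1),
        iteratedDeriv i g u / (Nat.factorial i : ℝ) * (-u) ^ i)
      - iteratedDeriv (k+1) g 0 / (Nat.factorial (k+1) : ℝ) * (-u) ^ (k+1) with hDdef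
  set R : ℝ → ℝ := fun t =>
    -((iteratedDeriv (k+1) g t - iteratedDeriv (k+1) g 0) * (-t) ^ k / (Nat.factorial k : ℝ))
    with hRdef
  have HD : ∀ t ∈ Metric.ball (0:ℝ) r, HasDerivAt D (R t) t := by
    intro t ht
    have hsum : HasDerivAt (fun u => ∑ i ∈ Finset.range (k+1),
        iteratedDeriv i g u / (Nat.factorial i : ℝ) * (-u) ^ i)
        (∑ i ∈ Finset.range (k+1),
          (iteratedDeriv (i+1) g t / (Nat.factorial i : ℝ) * (-t) ^ i
            + iteratedDeriv i g t / (Nat.factorial i : ℝ) * ((i:ℝ) * (-t) ^ (i-1) * (-1)))) t :=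
      HasDerivAt.fun_sum fun i _ =>
        (((hD i t ht).div_const _).mul ((hasDerivAt_neg t).pow i))
    have hsum_eq : (∑ i ∈ Finset.range (k+1),
          (iteratedDeriv (i+1) g t / (Nat.factorial i : ℝ) * (-t) ^ i
            + iteratedDeriv i g t / (Nat.factorial i : ℝ) * ((i:ℝ) * (-t) ^ (i-1) * (-1))))
        = iteratedDeriv (k+1) g t / (Nat.factorial k : ℝ) * (-t) ^ k := by
      set F : ℕ → ℝ := fun i => match i with
        | 0 => 0
        | (j+1) => iteratedDeriv (j+1) g t / (Nat.factorial j : ℝ) * (-t) ^ j with hF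
      have key : ∀ i : ℕ, iteratedDeriv (i+1) g t / (Nat.factorial i : ℝ) * (-t) ^ i
            + iteratedDeriv i g t / (Nat.factorial i : ℝ) * ((i:ℝ) * (-t) ^ (i-1) * (-1))
          = F (i+1) - F i := by
        intro i
        cases i with
        | zero => simp [hF]
        | succ j =>
          show _ = iteratedDeriv (j+2) g t / (Nat.factorial (j+1) : ℝ) * (-t) ^ (j+1)
              - iteratedDeriv (j+1) g t / (Nat.factorial j : ℝ) * (-t) ^ j
          have h1 : ((Nat.factorial j : ℝ)) ≠ 0 := Nat.cast_ne_zero.2 (Nat.factorial_ne_zero j)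
          have h2 : ((j:ℝ) + 1) ≠ 0 := by positivity
          simp only [Nat.succ_sub_one, Nat.factorial_succ, Nat.cast_mul, Nat.cast_add,
            Nat.cast_one]
          field_simp
          ring
      rw [Finset.sum_congr rfl (fun i _ => key i), Finset.sum_range_sub]
      simp [hF]
    have hc1 : HasDerivAt (fun u : ℝ =>
        iteratedDeriv (k+1) g 0 / (Nat.factorial (k+1) : ℝ) * (-u) ^ (k+1))
        (iteratedDeriv (k+1) g 0 / (Nat.factorial (k+1) : ℝ)
          * (((k:ℝ)+1) * (-t) ^ k * (-1))) t := by
      have := ((hasDerivAt_neg t).pow (k+1)).const_mul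
        (iteratedDeriv (k+1) g 0 / (Nat.factorial (k+1) : ℝ))
      simpa [Nat.succ_sub_one] using this
    have htot := ((hasDerivAt_const t (g 0) : HasDerivAt (fun _ : ℝ => g 0) (0:ℝ) t).sub (hsum_eq ▸ hsum)).sub hc1
    refine htot.congr_deriv ?_
    have h1 : ((Nat.factorial k : ℝ)) ≠ 0 := Nat.cast_ne_zero.2 (Nat.factorial_ne_zero k)
    have h2 : ((k:ℝ) + 1) ≠ 0 := by positivity
    simp only [hRdef, Nat.factorial_succ, Nat.cast_mul, Nat.cast_add, Nat.cast_one]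
    field_simp
    ring
  have hcont : ContinuousAt (iteratedDeriv (k+1) g) 0 :=
    ((hAn (k+1)) 0 (Metric.mem_ball_self hr)).continuousAt
  have hD0 : D 0 = 0 := by
    have hsum0 : (∑ i ∈ Finset.range (k+1),
        iteratedDeriv i g (0:ℝ) / (Nat.factorial i : ℝ) * (0:ℝ) ^ i) = g 0 := by
      rw [Finset.sum_eq_single 0]
      · simp [iteratedDeriv_zero]
      · intro i _ hi
        simp [zero_pow hi]
      · simp
    simp [hDdef, hsum0]
  rw [isLittleO_iff]
  intro ε hε
  have hεk : (0:ℝ) < ε * (Nat.factorial k : ℝ) := by positivity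
  have hev : ∀ᶠ t in 𝓝 (0:ℝ),
      |iteratedDeriv (k+1) g t - iteratedDeriv (k+1) g 0| < ε * (Nat.factorial k : ℝ) := by
    have := Metric.tendsto_nhds.mp hcont (ε * (Nat.factorial k : ℝ)) hεk
    simpa [Real.dist_eq] using this
  obtain ⟨δ, hδ, hδ'⟩ : ∃ δ > 0, ∀ t : ℝ, dist t 0 < δ →
      (|iteratedDeriv (k+1) g t - iteratedDeriv (k+1) g 0| < ε * (Nat.factorial k : ℝ)
        ∧ t ∈ Metric.ball (0:ℝ) r) :=
    Metric.eventually_nhds_iff.mp (hev.and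
      (Filter.eventually_of_mem (Metric.ball_mem_nhds 0 hr) (fun t ht => ht)))
  rw [Metric.eventually_nhds_iff]
  refine ⟨δ, hδ, fun u hu => ?_⟩
  have huabs : |u| < δ := by simpa [Real.dist_eq] using hu
  have hsub : Metric.closedBall (0:ℝ) |u| ⊆ Metric.ball (0:ℝ) δ :=
    Metric.closedBall_subset_ball huabs
  have hder : ∀ t ∈ Metric.closedBall (0:ℝ) |u|,
      HasDerivWithinAt D (R t) (Metric.closedBall (0:ℝ) |u|) t := by
    intro t ht
    exact (HD t (hδ' t (by simpa [Real.dist_eq] using hsub ht)).2).hasDerivWithinAt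
  have hbound : ∀ t ∈ Metric.closedBall (0:ℝ) |u|, ‖R t‖ ≤ ε * |u| ^ k := by
    intro t ht
    have htu : |t| ≤ |u| := by
      simpa [Real.dist_eq] using Metric.mem_closedBall.mp ht
    have hlt : |iteratedDeriv (k+1) g t - iteratedDeriv (k+1) g 0| ≤ ε * (Nat.factorial k : ℝ) :=
      le_of_lt (hδ' t (by simpa [Real.dist_eq] using hsub ht)).1
    have h1 : (0:ℝ) < (Nat.factorial k : ℝ) := by positivity
    have : ‖R t‖ = |iteratedDeriv (k+1) g t - iteratedDeriv (k+1) g 0| * |t| ^ k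
        / (Nat.factorial k : ℝ) := by
      simp [hRdef, Real.norm_eq_abs, abs_mul, abs_div, abs_pow, abs_neg,
        abs_of_pos h1]
    rw [this]
    have hstep : |iteratedDeriv (k+1) g t - iteratedDeriv (k+1) g 0| * |t| ^ k
        ≤ (ε * (Nat.factorial k : ℝ)) * |u| ^ k :=
      mul_le_mul hlt (pow_le_pow_left₀ (abs_nonneg t) htu k)
        (pow_nonneg (abs_nonneg t) k) (le_of_lt hεk)
    calc |iteratedDeriv (k+1) g t - iteratedDeriv (k+1) g 0| * |t| ^ k / (Nat.factorial k : ℝ)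
        ≤ (ε * (Nat.factorial k : ℝ)) * |u| ^ k / (Nat.factorial k : ℝ) :=
          (div_le_div_iff_of_pos_right h1).mpr hstep
      _ = ε * |u| ^ k := by field_simp
  have h0mem : (0:ℝ) ∈ Metric.closedBall (0:ℝ) |u| := by
    simp [Metric.mem_closedBall, abs_nonneg]
  have humem : u ∈ Metric.closedBall (0:ℝ) |u| := by
    simp [Metric.mem_closedBall, Real.dist_eq]
  have hmvt := (convex_closedBall (0:ℝ) |u|).norm_image_sub_le_of_norm_hasDerivWithin_le
    hder hbound h0mem humem
  rw [hD0, sub_zero, sub_zero] at hmvt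
  calc ‖D u‖ ≤ ε * |u| ^ k * ‖u‖ := hmvt
    _ = ε * |u| ^ (k+1) := by rw [Real.norm_eq_abs, pow_succ]; ring
    _ = ε * ‖|u| ^ (k+1)‖ := by
        rw [Real.norm_eq_abs, abs_of_nonneg (pow_nonneg (abs_nonneg u) _)]

theorem stmt6 (k : ℕ) (f g : ℝ → ℝ) (xb : ℝ)
    (hf : AnalyticAt ℝ f xb) (h0 : f xb = 0) (h1 : deriv f xb ≠ 0)
    (hg : ∀ᶠ y in nhds xb, g (f y) = y) :
    (fun x : ℝ =>
        (xb - (x + ∑ i ∈ Finset.Icc 1 k,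
            iteratedDeriv i g (f x) / (Nat.factorial i : ℝ) * (-(f x)) ^ i))
          - iteratedDeriv (k + 1) g (f xb) / (Nat.factorial (k + 1) : ℝ)
              * (deriv f xb) ^ (k + 1) * (xb - x) ^ (k + 1))
      =o[nhds xb] fun x : ℝ => |xb - x| ^ (k + 1) := by
  -- g is analytic at 0
  have hfc : ContDiffAt ℝ ⊤ f xb := hf.contDiffAt
  have hsd : HasStrictDerivAt f (deriv f xb) xb := hfc.hasStrictDerivAt (by simp)
  have hFd : HasFDerivAt f
      ((ContinuousLinearEquiv.unitsEquivAut ℝ (Units.mk0 (deriv f xb) h1)) : ℝ →L[ℝ] ℝ) xb :=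
    hsd.hasDerivAt.hasFDerivAt_equiv h1
  have hinv : ContDiffAt ℝ ⊤ (hfc.localInverse hFd (by simp)) (f xb) :=
    hfc.to_localInverse hFd (by simp)
  have hequ : ∀ᶠ y in 𝓝 (f xb), g y = hfc.localInverse hFd (by simp) y :=
    (hfc.hasStrictFDerivAt' hFd (by simp)).localInverse_unique hg
  have hgc : ContDiffAt ℝ ⊤ g (f xb) := hinv.congr_of_eventuallyEq hequ
  have hga : AnalyticAt ℝ g 0 := by rw [h0] at hgc; exact hgc.analyticAt
  have hgb : g 0 = xb := by
    have := hg.self_of_nhds; rwa [h0] at this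
  set L := deriv f xb with hL
  set c := iteratedDeriv (k+1) g 0 / (Nat.factorial (k+1) : ℝ) with hc
  -- part 1
  have hB := aux_taylor_s6 k g hga
  have htend : Filter.Tendsto f (𝓝 xb) (𝓝 0) := h0 ▸ hf.continuousAt
  have hcomp := hB.comp_tendsto htend
  have hfO : (fun x => f x) =O[𝓝 xb] fun x => x - xb := by
    simpa [h0] using hf.differentiableAt.isBigO_sub
  have habs : (fun x => |f x|) =O[𝓝 xb] fun x => |x - xb| := by
    simpa [Real.norm_eq_abs] using hfO.norm_norm
  have hpowO : (fun x => |f x| ^ (k+1)) =O[𝓝 xb] fun x => |x - xb| ^ (k+1) := habs.pow (k+1)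
  have part1 : (fun x => g 0 - (∑ i ∈ Finset.range (k+1),
        iteratedDeriv i g (f x) / (Nat.factorial i : ℝ) * (-(f x)) ^ i)
      - c * (-(f x)) ^ (k+1)) =o[𝓝 xb] fun x => |x - xb| ^ (k+1) :=
    hcomp.trans_isBigO hpowO
  -- part 2
  have hlin : (fun x => (-(f x)) - L * (xb - x)) =o[𝓝 xb] fun x => x - xb := by
    have hd := hf.differentiableAt.hasDerivAt
    rw [hasDerivAt_iff_isLittleO] at hd
    refine hd.neg_left.congr_left fun x => ?_
    simp [h0, smul_eq_mul]
    ring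
  have haO : (fun x => -(f x)) =O[𝓝 xb] fun x => x - xb := hfO.neg_left
  have hbO : (fun x => L * (xb - x)) =O[𝓝 xb] fun x => x - xb := by
    have h := (isBigO_refl (fun x : ℝ => x - xb) (𝓝 xb)).const_mul_left (-L)
    refine h.congr_left fun x => ?_
    ring
  have hsumO : (fun x => ∑ i ∈ Finset.range (k+1), (-(f x)) ^ i * (L * (xb - x)) ^ (k - i))
      =O[𝓝 xb] fun x => (x - xb) ^ k := by
    refine IsBigO.fun_sum fun i hi => ?_
    have hik : i ≤ k := Nat.lt_succ_iff.mp (Finset.mem_range.mp hi)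
    have h := (haO.pow i).mul (hbO.pow (k - i))
    refine h.trans (IsBigO.of_bound 1 (Filter.Eventually.of_forall fun x => ?_))
    rw [← pow_add, Nat.add_sub_cancel' hik]
    simp
  have hdiff : (fun x => (-(f x)) ^ (k+1) - (L * (xb - x)) ^ (k+1))
      =o[𝓝 xb] fun x => (x - xb) ^ k * (x - xb) := by
    refine (hsumO.mul_isLittleO hlin).congr_left fun x => ?_
    exact geom_sum₂_mul _ _ (k+1)
  have part2core : (fun x => (-(f x)) ^ (k+1) - (L * (xb - x)) ^ (k+1))
      =o[𝓝 xb] fun x => |x - xb| ^ (k+1) := by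
    refine hdiff.trans_isBigO (IsBigO.of_bound 1 (Filter.Eventually.of_forall fun x => ?_))
    simp [Real.norm_eq_abs, abs_mul, abs_pow, pow_succ, abs_abs]
  have part2 : (fun x => c * ((-(f x)) ^ (k+1) - (L * (xb - x)) ^ (k+1)))
      =o[𝓝 xb] fun x => |x - xb| ^ (k+1) := part2core.const_mul_left c
  -- assemble
  rw [show (fun x : ℝ => |xb - x| ^ (k+1)) = fun x : ℝ => |x - xb| ^ (k+1) from
    funext fun x => by rw [abs_sub_comm]]
  refine (part1.add part2).congr' ?_ EventuallyEq.rfl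
  filter_upwards [hg] with x hx
  have hsplit : (∑ i ∈ Finset.range (k+1),
        iteratedDeriv i g (f x) / (Nat.factorial i : ℝ) * (-(f x)) ^ i)
      = g (f x) + ∑ i ∈ Finset.Icc 1 k,
        iteratedDeriv i g (f x) / (Nat.factorial i : ℝ) * (-(f x)) ^ i := by
    have hins : Finset.range (k+1) = insert 0 (Finset.Icc 1 k) := by
      ext i
      simp [Nat.lt_succ_iff]
      omega
    rw [hins, Finset.sum_insert (by simp)]
    simp [iteratedDeriv_zero]
  rw [h0, hsplit, hx, hgb, mul_pow]
  ring
end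

section
/- Let F : ℝⁿ → ℝⁿ be C^{m+2} near a root x̄ with F(x̄) = 0 and DF(x̄) invertible, and let G be the local inverse of F near x̄. Define Φ_m(x) = x + Σ_{p=1}^{m} (1/p!)·D^p G(F(x))(−F(x), …, −F(x)) (p-fold argument). Then there exist δ > 0 and C > 0 such that ‖x − x̄‖ < δ implies ‖Φ_m(x) − x̄‖ ≤ C·‖x − x̄‖^{m+1}. -/
open Filter

open scoped Topology

/-- Uniform Taylor remainder bound for the expansion of `G` centered at `y`, evaluated at `0`. -/
lemma taylor_bound_aux {E F : Type*} [NormedAddCommGroup E] [NormedSpace ℝ E]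
    [NormedAddCommGroup F] [NormedSpace ℝ F] (m : ℕ) {G : E → F} {r M : ℝ}
    (hr : 0 < r) (hG : ContDiffOn ℝ (m + 1) G (Metric.ball 0 r))
    (hM : ∀ z ∈ Metric.closedBall (0 : E) (r / 2), ‖iteratedFDeriv ℝ (m + 1) G z‖ ≤ M)
    {y : E} (hy : ‖y‖ ≤ r / 2) :
    ‖G 0 - ∑ p ∈ Finset.range (m + 1),
        (1 / (p.factorial : ℝ)) • iteratedFDeriv ℝ p G y (fun _ => -y)‖
      ≤ M * ‖y‖ ^ (m + 1) := by
  have hM0 : 0 ≤ M := le_trans (norm_nonneg _) (hM 0 (by simp [le_of_lt, hr.le]; positivity))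
  set L : ℝ →L[ℝ] E := ContinuousLinearMap.toSpanSingleton ℝ (-y) with hL
  have hLs : ∀ s : ℝ, L s = s • (-y) := fun s => rfl
  have hmapc : ∀ s ∈ Set.Icc (-1 : ℝ) 0, L s ∈ Metric.closedBall (0 : E) (r / 2) := by
    intro s hs
    rw [Metric.mem_closedBall, dist_zero_right, hLs, norm_smul, norm_neg, Real.norm_eq_abs]
    have habs : |s| ≤ 1 := abs_le.2 ⟨hs.1, hs.2.trans zero_le_one⟩
    calc |s| * ‖y‖ ≤ 1 * (r / 2) := by
          apply mul_le_mul habs hy (norm_nonneg _) zero_le_one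
      _ = r / 2 := one_mul _
  have hmapb : ∀ s ∈ Set.Icc (-1 : ℝ) 0, L s ∈ Metric.ball (0 : E) r := fun s hs =>
    Metric.closedBall_subset_ball (by linarith) (hmapc s hs)
  set V : Set ℝ := L ⁻¹' (Metric.ball (0 : E) r) with hV
  have hVopen : IsOpen V := Metric.isOpen_ball.preimage L.continuous
  have hIccV : Set.Icc (-1 : ℝ) 0 ⊆ V := fun s hs => hmapb s hs
  have hcomp : ContDiffOn ℝ (m + 1) (G ∘ L) V :=
    hG.comp L.contDiff.contDiffOn (fun s hs => hs)
  have hUIcc : UniqueDiffOn ℝ (Set.Icc (-1 : ℝ) 0) := uniqueDiffOn_Icc (by norm_num)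
  -- the key identification of iterated derivatives
  have key : ∀ p : ℕ, p ≤ m + 1 → ∀ s ∈ Set.Icc (-1 : ℝ) 0,
      iteratedDerivWithin p (G ∘ L) (Set.Icc (-1 : ℝ) 0) s
        = iteratedFDeriv ℝ p G (L s) (fun _ => -y) := by
    intro p hp s hs
    have hsV : s ∈ V := hIccV hs
    have h1 : iteratedFDerivWithin ℝ p (G ∘ L) (Set.Icc (-1 : ℝ) 0) s
        = iteratedFDerivWithin ℝ p (G ∘ L) V s := by
      have hT := (hcomp.ftaylorSeriesWithin hVopen.uniqueDiffOn).mono hIccV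
      have := hT.eq_iteratedFDerivWithin_of_uniqueDiffOn (m := p) (by exact_mod_cast hp)
        hUIcc hs
      rw [← this]
      rfl
    have h2 : iteratedFDerivWithin ℝ p (G ∘ L) V s = iteratedFDeriv ℝ p (G ∘ L) s :=
      iteratedFDerivWithin_of_isOpen p hVopen hsV
    have h3 : iteratedFDerivWithin ℝ p (G ∘ L) V s
        = (iteratedFDerivWithin ℝ p G (Metric.ball (0 : E) r) (L s)).compContinuousLinearMap
            fun _ => L :=
      L.iteratedFDerivWithin_comp_right hG Metric.isOpen_ball.uniqueDiffOn
        hVopen.uniqueDiffOn (hmapb s hs) (by exact_mod_cast hp)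
    have h4 : iteratedFDerivWithin ℝ p G (Metric.ball (0 : E) r) (L s)
        = iteratedFDeriv ℝ p G (L s) :=
      iteratedFDerivWithin_of_isOpen p Metric.isOpen_ball (hmapb s hs)
    rw [iteratedDerivWithin_eq_iteratedFDerivWithin, h1, h3, h4]
    rw [ContinuousMultilinearMap.compContinuousLinearMap_apply]
    congr 1
    funext i
    show L 1 = -y
    rw [hLs, one_smul]
  -- Taylor's theorem on [-1, 0]
  have hC : ∀ s ∈ Set.Icc (-1 : ℝ) 0,
      ‖iteratedDerivWithin (m + 1) (G ∘ L) (Set.Icc (-1 : ℝ) 0) s‖ ≤ M * ‖y‖ ^ (m + 1) := by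
    intro s hs
    rw [key (m + 1) le_rfl s hs]
    calc ‖iteratedFDeriv ℝ (m + 1) G (L s) (fun _ => -y)‖
        ≤ ‖iteratedFDeriv ℝ (m + 1) G (L s)‖ * ∏ _i : Fin (m + 1), ‖-y‖ :=
          (iteratedFDeriv ℝ (m + 1) G (L s)).le_opNorm _
      _ = ‖iteratedFDeriv ℝ (m + 1) G (L s)‖ * ‖y‖ ^ (m + 1) := by
          rw [Finset.prod_const, norm_neg]; simp
      _ ≤ M * ‖y‖ ^ (m + 1) := by
          apply mul_le_mul_of_nonneg_right (hM _ (hmapc s hs)) (by positivity)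
  have hT := taylor_mean_remainder_bound (f := G ∘ L) (a := -1) (b := 0) (x := 0) (n := m)
    (by norm_num) (hcomp.mono hIccV) (by norm_num) hC
  have he1 : (G ∘ L) 0 = G 0 := by simp [Function.comp, hLs]
  have he2 : taylorWithinEval (G ∘ L) m (Set.Icc (-1 : ℝ) 0) (-1) 0
      = ∑ p ∈ Finset.range (m + 1),
          (1 / (p.factorial : ℝ)) • iteratedFDeriv ℝ p G y (fun _ => -y) := by
    rw [taylor_within_apply]
    apply Finset.sum_congr rfl
    intro p hp
    rw [Finset.mem_range, Nat.lt_succ_iff] at hp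
    rw [key p (hp.trans m.le_succ) (-1) (by norm_num)]
    congr 1
    · norm_num
    · congr 1
      rw [hLs]
      simp
  rw [he1, he2] at hT
  calc ‖G 0 - ∑ p ∈ Finset.range (m + 1),
        (1 / (p.factorial : ℝ)) • iteratedFDeriv ℝ p G y (fun _ => -y)‖
      ≤ M * ‖y‖ ^ (m + 1) * (0 - (-1)) ^ (m + 1) / m.factorial := hT
    _ = M * ‖y‖ ^ (m + 1) / m.factorial := by norm_num
    _ ≤ M * ‖y‖ ^ (m + 1) := by
        apply div_le_self (by positivity)
        exact_mod_cast Nat.one_le_iff_ne_zero.2 m.factorial_ne_zero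

theorem stmt11 (n m : ℕ) (hm : 1 ≤ m) (F G : (Fin n → ℝ) → (Fin n → ℝ)) (xb : Fin n → ℝ)
    (hF : ContDiffAt ℝ (m + 2) F xb) (h0 : F xb = 0) (hinv : IsUnit (fderiv ℝ F xb))
    (hG : ∀ᶠ y in nhds xb, G (F y) = y) :
    ∃ δ > 0, ∃ C > 0, ∀ x : Fin n → ℝ, ‖x - xb‖ < δ →
      ‖(x + ∑ p ∈ Finset.Icc 1 m,
          (1 / (Nat.factorial p : ℝ)) • iteratedFDeriv ℝ p G (F x) (fun _ => -(F x))) - xb‖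
        ≤ C * ‖x - xb‖ ^ (m + 1) := by
  classical
  have hone : (1 : WithTop ℕ∞) ≤ (m : WithTop ℕ∞) + 2 := by
    calc (1 : WithTop ℕ∞) ≤ 2 := one_le_two
      _ ≤ (m : WithTop ℕ∞) + 2 := le_add_self
  have hne : (m : WithTop ℕ∞) + 2 ≠ 0 := (lt_of_lt_of_le zero_lt_one hone).ne'
  -- the derivative as a continuous linear equiv
  let f' : (Fin n → ℝ) ≃L[ℝ] (Fin n → ℝ) := ContinuousLinearEquiv.ofUnit hinv.unit
  have hcoe : (f' : (Fin n → ℝ) →L[ℝ] (Fin n → ℝ)) = fderiv ℝ F xb := hinv.unit_spec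
  have hfd : HasFDerivAt F (f' : (Fin n → ℝ) →L[ℝ] (Fin n → ℝ)) xb := by
    rw [hcoe]; exact (hF.differentiableAt hne).hasFDerivAt
  -- the local inverse
  have hlinv : ContDiffAt ℝ ((m : WithTop ℕ∞) + 2) (hF.localInverse hfd hne) (F xb) :=
    hF.to_localInverse (f' := f') (hf' := hfd) (hn := hne)
  have hGeq : ∀ᶠ z in 𝓝 (F xb), G z = hF.localInverse hfd hne z :=
    (hF.hasStrictFDerivAt' hfd hne).localInverse_unique hG
  have hGc : ContDiffAt ℝ ((m : WithTop ℕ∞) + 2) G (F xb) :=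
    hlinv.congr_of_eventuallyEq hGeq
  rw [h0] at hGc
  -- a ball around 0 where G is smooth
  obtain ⟨u, hu_mem, hGu⟩ := hGc.contDiffOn le_rfl (by
    intro h
    exfalso
    norm_cast at h
    rw [← WithTop.coe_natCast] at h
    exact (WithTop.natCast_ne_top _) (WithTop.coe_inj.1 h))
  obtain ⟨r, hr0, hru⟩ := Metric.nhds_basis_closedBall.mem_iff.1 hu_mem
  have hball_sub : Metric.ball (0 : Fin n → ℝ) r ⊆ u :=
    le_trans Metric.ball_subset_closedBall hru
  have hGball : ContDiffOn ℝ ((m : WithTop ℕ∞) + 2) G (Metric.ball 0 r) := hGu.mono hball_sub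
  -- bound on the (m+1)-st derivative on the closed ball of radius r/2
  have hm1le : ((m + 1 : ℕ) : WithTop ℕ∞) ≤ (m : WithTop ℕ∞) + 2 := by
    push_cast
    exact add_le_add_right one_le_two _
  have hcont : ContinuousOn (iteratedFDeriv ℝ (m + 1) G) (Metric.ball 0 r) := by
    have h1 := hGball.continuousOn_iteratedFDerivWithin (m := m + 1) hm1le
      Metric.isOpen_ball.uniqueDiffOn
    exact h1.congr fun z hz => (iteratedFDerivWithin_of_isOpen _ Metric.isOpen_ball hz).symm
  obtain ⟨M, hM⟩ := (isCompact_closedBall (0 : Fin n → ℝ) (r / 2)).exists_bound_of_continuousOn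
    ((hcont.norm).mono (Metric.closedBall_subset_ball (by linarith)))
  have hM' : ∀ z ∈ Metric.closedBall (0 : Fin n → ℝ) (r / 2),
      ‖iteratedFDeriv ℝ (m + 1) G z‖ ≤ M := fun z hz => by simpa using hM z hz
  have hM0 : 0 ≤ M := le_trans (norm_nonneg _) (hM' 0 (by simp [hr0.le]; positivity))
  -- Lipschitz bound for F near xb
  obtain ⟨K, t, ht, hK⟩ := (hF.of_le hone).exists_lipschitzOnWith
  have hxbt : xb ∈ t := mem_of_mem_nhds ht
  -- the neighborhood where everything holds
  have hset : t ∩ {y | G (F y) = y} ∈ 𝓝 xb := Filter.inter_mem ht hG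
  obtain ⟨δ₀, hδ₀, hballsub⟩ := Metric.mem_nhds_iff.1 hset
  set k : ℝ := (K : ℝ) with hk
  have hk0 : 0 ≤ k := K.coe_nonneg
  refine ⟨min δ₀ ((r / 2) / (k + 1)), lt_min hδ₀ (by positivity),
    (M + 1) * (k + 1) ^ (m + 1), by positivity, fun x hx => ?_⟩
  have hxball : x ∈ Metric.ball xb δ₀ := by
    rw [Metric.mem_ball, dist_eq_norm]
    exact lt_of_lt_of_le hx (min_le_left _ _)
  have hxt : x ∈ t := (hballsub hxball).1
  have hGFx : G (F x) = x := (hballsub hxball).2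
  -- bound ‖F x‖
  have hFx : ‖F x‖ ≤ k * ‖x - xb‖ := by
    have := hK.dist_le_mul x hxt xb hxbt
    rwa [dist_eq_norm, dist_eq_norm, h0, sub_zero] at this
  have hxd : ‖x - xb‖ ≤ (r / 2) / (k + 1) :=
    le_trans hx.le (min_le_right _ _)
  have hFx2 : ‖F x‖ ≤ r / 2 := by
    calc ‖F x‖ ≤ k * ‖x - xb‖ := hFx
      _ ≤ (k + 1) * ((r / 2) / (k + 1)) := by
          apply mul_le_mul (by linarith) hxd (norm_nonneg _) (by linarith)
      _ = r / 2 := by field_simp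
  -- apply the Taylor bound
  have htay := taylor_bound_aux m (G := G) (r := r) (M := M) hr0
    (hGball.of_le (by exact_mod_cast hm1le)) hM' hFx2
  -- identify the sum
  have hrange : Finset.range (m + 1) = insert 0 (Finset.Icc 1 m) := by
    ext p
    simp only [Finset.mem_range, Finset.mem_insert, Finset.mem_Icc]
    omega
  have hsum : x + ∑ p ∈ Finset.Icc 1 m,
      (1 / (Nat.factorial p : ℝ)) • iteratedFDeriv ℝ p G (F x) (fun _ => -(F x))
      = ∑ p ∈ Finset.range (m + 1),
        (1 / (Nat.factorial p : ℝ)) • iteratedFDeriv ℝ p G (F x) (fun _ => -(F x)) := by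
    rw [hrange, Finset.sum_insert (by simp)]
    congr 1
    rw [iteratedFDeriv_zero_apply, hGFx]
    simp
  have hxb0 : xb = G 0 := by
    have := hG.self_of_nhds
    rw [h0] at this
    exact this.symm
  have hnorm : ‖(x + ∑ p ∈ Finset.Icc 1 m,
      (1 / (Nat.factorial p : ℝ)) • iteratedFDeriv ℝ p G (F x) (fun _ => -(F x))) - xb‖
      = ‖G 0 - ∑ p ∈ Finset.range (m + 1),
        (1 / (Nat.factorial p : ℝ)) • iteratedFDeriv ℝ p G (F x) (fun _ => -(F x))‖ := by
    rw [hsum, hxb0, norm_sub_rev]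
  rw [hnorm]
  calc ‖G 0 - ∑ p ∈ Finset.range (m + 1),
        (1 / (Nat.factorial p : ℝ)) • iteratedFDeriv ℝ p G (F x) (fun _ => -(F x))‖
      ≤ M * ‖F x‖ ^ (m + 1) := htay
    _ ≤ M * (k * ‖x - xb‖) ^ (m + 1) := by
        apply mul_le_mul_of_nonneg_left (pow_le_pow_left₀ (norm_nonneg _) hFx _) hM0
    _ = M * k ^ (m + 1) * ‖x - xb‖ ^ (m + 1) := by rw [mul_pow]; ring
    _ ≤ (M + 1) * (k + 1) ^ (m + 1) * ‖x - xb‖ ^ (m + 1) := by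
        apply mul_le_mul_of_nonneg_right _ (by positivity)
        apply mul_le_mul (by linarith) (pow_le_pow_left₀ hk0 (by linarith) _) (by positivity)
          (by linarith)
end
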